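/- Let t ≥ 1. For n ≥ 0 let a_n denote the number of Deutsch paths of length n from height t to height 0 all of whose heights h_i satisfy h_i ≥ 0 (no upper bound). Then in the formal power series ring ℤ[[v]], the series S = Σ_{n≥0} a_n · vⁿ · ((1+v+v²)⁻¹)ⁿ satisfies S · (1+v)² = v · (1+v+v²) · (1+v)^{t}. -/

import Mathlib

open PowerSeries Finset

/-- The power series `1 + v + v²` over `ℤ`. -/
noncomputable def q : PowerSeries ℤ := 1 + X + X ^ 2

/-- `v · (1+v+v²)⁻¹` as a formal power series over `ℤ`. -/
noncomputable def w : PowerSeries ℤ := X * PowerSeries.invOfUnit q 1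

/-- `p` is a Deutsch path of length `n`: each step is either an up-step `+1`
or a down-step of arbitrary (negative) size. -/
def IsDeutschPath (n : ℕ) (p : Fin (n + 1) → ℤ) : Prop :=
  ∀ i : Fin n, p i.succ - p i.castSucc = 1 ∨ p i.succ - p i.castSucc ≤ -1

/-- Number of Deutsch paths of length `n` from height `a` to height `b`
all of whose heights satisfy the predicate `P`. -/
noncomputable def pathCount (n : ℕ) (a b : ℤ) (P : ℤ → Prop) : ℕ :=
  Nat.card {p : Fin (n + 1) → ℤ //
    p 0 = a ∧ p (Fin.last n) = b ∧ (∀ i, P (p i)) ∧ IsDeutschPath n p}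

/-- The power series `Σ_{n≥0} a_n · vⁿ · ((1+v+v²)⁻¹)ⁿ`.  Since the `n`-th
summand has order `≥ n`, its coefficient of `v^N` is the (finite) sum of the
corresponding coefficients of the summands with `n ≤ N`. -/
noncomputable def series (a : ℕ → ℕ) : PowerSeries ℤ :=
  PowerSeries.mk fun N => ∑ n ∈ range (N + 1), (a n : ℤ) * coeff N (w ^ n)

/-! Write `S_a` for the series of nonnegative Deutsch paths from height `a` to `0`. Splitting off
the first step (up to `a + 1`, or down to any `b < a`) and using `q · w = v` gives
`q S_a = [a = 0] q + v (S_{a+1} + Σ_{b<a} S_b)`. After multiplication by `(1+v)²` the same system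
is solved by `T_0 = q (1+v)` and `T_a = v q (1+v)^a` for `a ≥ 1`. Since `q` is a unit, the
difference of two solutions is divisible by every power of `v`, so `S_a (1+v)² = T_a`. -/

namespace PowerSeries

variable {R : Type*} [CommRing R]

theorem eq_zero_of_forall_X_pow_dvd {f : R⟦X⟧} (h : ∀ n, X ^ n ∣ f) : f = 0 := by
  ext n
  simpa using X_pow_dvd_iff.mp (h (n + 1)) n n.lt_succ_self

theorem eq_zero_of_isUnit_mul_eq_X_mul_sum {ι : Type*} {u : R⟦X⟧} (hu : IsUnit u)
    {D : ι → R⟦X⟧} {s : ι → Finset ι} (h : ∀ i, u * D i = X * ∑ j ∈ s i, D j) : D = 0 := by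
  have hdvd : ∀ n i, X ^ n ∣ D i := by
    intro n
    induction n with
    | zero => simp
    | succ n ih =>
      intro i
      rw [← hu.dvd_mul_left, h i, pow_succ']
      exact mul_dvd_mul_left X (Finset.dvd_sum fun j _ => ih j)
  funext i
  exact eq_zero_of_forall_X_pow_dvd (hdvd · i)

end PowerSeries

theorem isUnit_q : IsUnit q := isUnit_iff_constantCoeff.mpr (by simp [q])

theorem q_mul_w : q * w = X := by
  rw [w, mul_left_comm, mul_invOfUnit q 1 (by simp [q]), mul_one]

theorem X_pow_dvd_w_pow (n : ℕ) : X ^ n ∣ w ^ n := by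
  rw [w, mul_pow]
  exact dvd_mul_right _ _

theorem X_pow_dvd_series_sub_sum (c : ℕ → ℕ) (M : ℕ) :
    X ^ M ∣ series c - ∑ n ∈ range M, c n • w ^ n := by
  refine X_pow_dvd_iff.mpr fun m hm => ?_
  rw [map_sub, series, coeff_mk, map_sum, sub_eq_zero]
  simp only [map_nsmul]
  simp only [nsmul_eq_mul]
  refine sum_subset (fun n hn => by simp at hn ⊢; omega) fun n hnM hnm => ?_
  simp only [mem_range, not_lt] at hnM hnm
  rw [X_pow_dvd_iff.mp (X_pow_dvd_w_pow n) m (by omega), mul_zero]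

theorem series_eq_add_w_mul (c : ℕ → ℕ) :
    series c = c 0 • 1 + w * series (fun n => c (n + 1)) := by
  refine sub_eq_zero.mp (PowerSeries.eq_zero_of_forall_X_pow_dvd fun M => ?_)
  have htrunc : ∑ n ∈ range (M + 1), c n • w ^ n =
      c 0 • 1 + w * ∑ n ∈ range M, c (n + 1) • w ^ n := by
    simp only [sum_range_succ', mul_sum, mul_smul_comm, pow_succ', pow_zero]
    exact add_comm _ _
  have hhead := (pow_dvd_pow X M.le_succ).trans (X_pow_dvd_series_sub_sum c (M + 1))
  have htail := dvd_mul_of_dvd_right (X_pow_dvd_series_sub_sum (fun n => c (n + 1)) M) w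
  convert dvd_sub hhead htail using 1
  rw [htrunc]
  ring

theorem q_mul_series (c : ℕ → ℕ) :
    q * series c = c 0 • q + X * series (fun n => c (n + 1)) := by
  rw [series_eq_add_w_mul, mul_add, mul_smul_comm, mul_one, ← mul_assoc, q_mul_w]

theorem series_sum {ι : Type*} (s : Finset ι) (c : ι → ℕ → ℕ) :
    series (fun n => ∑ i ∈ s, c i n) = ∑ i ∈ s, series (c i) := by
  ext N
  simp only [series, coeff_mk, map_sum, Nat.cast_sum, sum_mul]
  exact sum_comm

theorem isDeutschPath_cons {n : ℕ} (x : ℤ) (p : Fin (n + 1) → ℤ) :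
    IsDeutschPath (n + 1) (Fin.cons x p) ↔
      (p 0 - x = 1 ∨ p 0 - x ≤ -1) ∧ IsDeutschPath n p := by
  simp [IsDeutschPath, Fin.forall_fin_succ]

abbrev NonnegPath (n a : ℕ) : Type :=
  {p : Fin (n + 1) → ℤ // p 0 = a ∧ p (Fin.last n) = 0 ∧ (∀ i, 0 ≤ p i) ∧ IsDeutschPath n p}

theorem nonnegPath_tail_iff {n : ℕ} (p : Fin (n + 2) → ℤ) :
    (p (Fin.last (n + 1)) = 0 ∧ (∀ i, 0 ≤ p i) ∧ IsDeutschPath (n + 1) p) ↔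
      0 ≤ p 0 ∧ (Fin.tail p 0 - p 0 = 1 ∨ Fin.tail p 0 - p 0 ≤ -1) ∧
        (Fin.tail p (Fin.last n) = 0 ∧ (∀ i, 0 ≤ Fin.tail p i) ∧ IsDeutschPath n (Fin.tail p)) := by
  conv_lhs => rw [← Fin.cons_self_tail p]
  simp only [← Fin.succ_last, Fin.cons_succ, Fin.forall_fin_succ, Fin.cons_zero,
    isDeutschPath_cons]
  tauto

def nextHeights (a : ℕ) : Finset ℕ := insert (a + 1) (range a)

theorem mem_nextHeights_iff {a c : ℕ} :
    c ∈ nextHeights a ↔ ((c : ℤ) - a = 1 ∨ (c : ℤ) - a ≤ -1) := by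
  simp only [nextHeights, mem_insert, mem_range]
  omega

def nonnegPathSuccEquiv (n a : ℕ) :
    NonnegPath (n + 1) a ≃ Σ c : nextHeights a, NonnegPath n c where
  toFun p :=
    have hp := (nonnegPath_tail_iff p.1).mp p.2.2
    have hc : ((Fin.tail p.1 0).toNat : ℤ) = Fin.tail p.1 0 := Int.toNat_of_nonneg (hp.2.2.2.1 0)
    ⟨⟨(Fin.tail p.1 0).toNat,
        mem_nextHeights_iff.mpr (by rw [hc]; simpa only [p.2.1] using hp.2.1)⟩,
      ⟨Fin.tail p.1, hc.symm, hp.2.2⟩⟩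
  invFun c :=
    ⟨Fin.cons (a : ℤ) c.2.1, rfl, (nonnegPath_tail_iff _).mpr
      ⟨by simp, by simpa [c.2.2.1] using mem_nextHeights_iff.mp c.1.2, by simpa using c.2.2.2⟩⟩
  left_inv p := Subtype.ext (by simp [← p.2.1])
  right_inv c := Sigma.subtype_ext (Subtype.ext (by simp [c.2.2.1])) (by simp)

instance (a : ℕ) : Subsingleton (NonnegPath 0 a) :=
  ⟨fun p p' => Subtype.ext (funext fun i => by rw [Fin.fin_one_eq_zero i, p.2.1, p'.2.1])⟩

instance (n a : ℕ) : Finite (NonnegPath n a) := by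
  induction n generalizing a with
  | zero => infer_instance
  | succ n ih => exact Finite.of_equiv _ (nonnegPathSuccEquiv n a).symm

theorem card_nonnegPath_zero (a : ℕ) :
    Nat.card (NonnegPath 0 a) = if a = 0 then 1 else 0 := by
  split_ifs with ha
  · subst ha
    exact Nat.card_eq_one_iff_unique.mpr
      ⟨inferInstance, ⟨⟨fun _ => 0, by simp, rfl, by simp, Fin.elim0⟩⟩⟩
  · have : IsEmpty (NonnegPath 0 a) := ⟨fun p => ha (by exact_mod_cast p.2.1.symm.trans p.2.2.1)⟩
    exact Nat.card_of_isEmpty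

theorem card_nonnegPath_succ (n a : ℕ) :
    Nat.card (NonnegPath (n + 1) a) = ∑ c ∈ nextHeights a, Nat.card (NonnegPath n c) := by
  rw [Nat.card_congr (nonnegPathSuccEquiv n a), Nat.card_sigma,
    sum_coe_sort (nextHeights a) fun c => Nat.card (NonnegPath n c)]

theorem pathCount_eq_card (n a : ℕ) :
    pathCount n a 0 (fun x => 0 ≤ x) = Nat.card (NonnegPath n a) :=
  rfl

noncomputable def pathSeries (a : ℕ) : PowerSeries ℤ :=
  series fun n => pathCount n a 0 (fun x => 0 ≤ x)

theorem q_mul_pathSeries (a : ℕ) :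
    q * pathSeries a = (if a = 0 then q else 0) + X * ∑ c ∈ nextHeights a, pathSeries c := by
  simp only [pathSeries, q_mul_series, pathCount_eq_card, card_nonnegPath_succ, ← series_sum]
  rw [card_nonnegPath_zero]
  split_ifs <;> simp

noncomputable def closedForm (a : ℕ) : PowerSeries ℤ :=
  if a = 0 then q * (1 + X) else X * q * (1 + X) ^ a

theorem sum_range_succ_closedForm (a : ℕ) :
    ∑ b ∈ range (a + 1), closedForm b = q * (1 + X) ^ (a + 1) := by
  induction a with
  | zero => simp [closedForm]
  | succ a ih =>
    rw [sum_range_succ, ih, closedForm, if_neg a.succ_ne_zero]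
    ring

theorem q_mul_closedForm (a : ℕ) :
    q * closedForm a =
      (if a = 0 then q else 0) * (1 + X) ^ 2 + X * ∑ c ∈ nextHeights a, closedForm c := by
  rw [nextHeights, sum_insert (by simp)]
  rcases a with _ | a
  · simp only [closedForm, q, range_zero, sum_empty, add_zero, zero_add, one_ne_zero,
      ↓reduceIte]
    ring
  · rw [sum_range_succ_closedForm]
    simp only [closedForm, q, Nat.add_one_ne_zero, ↓reduceIte]
    ring

theorem pathSeries_mul_sq (a : ℕ) : pathSeries a * (1 + X) ^ 2 = closedForm a := by
  have hdiff : (fun a => pathSeries a * (1 + X) ^ 2 - closedForm a) = 0 :=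
    PowerSeries.eq_zero_of_isUnit_mul_eq_X_mul_sum isUnit_q fun a => by
      rw [mul_sub, sum_sub_distrib, ← sum_mul, ← mul_assoc, q_mul_pathSeries, q_mul_closedForm]
      ring
  exact sub_eq_zero.mp (congrFun hdiff a)

theorem stmt11 (t : ℕ) (ht : 1 ≤ t) :
    (series fun n => pathCount n t 0 (fun x => 0 ≤ x)) * (1 + X) ^ 2 =
      X * q * (1 + X) ^ t := by
  rw [← pathSeries, pathSeries_mul_sq, closedForm, if_neg (by omega)]
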